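/- arXiv:1003.5131 — 3 statements merged into one kernel-verified Lean document; each statement's English description precedes it below -/
import Mathlib

section
/- For all α, β > 0 with θ := α+β, every m ∈ ℕ and all real x, y, one has the polynomial identity Σ_{j=0}^m C(m,j) ((θ)_(m)/((α)_(j)(β)_(m−j))) (xy)^j ((1−x)(1−y))^{m−j} = Σ_{n=0}^m (m_[n]/(θ+m)_(n)) ζ_n^{α,β} R_n^{α,β}(x) R_n^{α,β}(y). -/
open MeasureTheory Finset

noncomputable section

/-- Rising factorial `(a)_(n) = a (a+1) ⋯ (a+n−1)`. -/
def rf (a : ℝ) : ℕ → ℝ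
  | 0 => 1
  | n + 1 => rf a n * (a + n)

/-- Falling factorial `N_[n] = N (N−1) ⋯ (N−n+1)` of a natural number, as a real. -/
def ff (N n : ℕ) : ℝ := (N.descFactorial n : ℝ)

/-- Triangular array `a^θ_{n,m}` (meaningful for `0 ≤ m ≤ n`). -/
def acoef (θ : ℝ) (n m : ℕ) : ℝ :=
  if n = 0 then 1
  else (θ + 2 * n - 1) * (-1 : ℝ) ^ (n - m) * rf (θ + m) (n - 1) /
    ((m.factorial : ℝ) * ((n - m).factorial : ℝ))

/-- The simplex `Δ_{d−1} = {x ∈ [0,1]^d : x₁ + ⋯ + x_d = 1}`. -/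
def simplex (d : ℕ) : Set (Fin d → ℝ) :=
  {x | (∀ i, 0 ≤ x i ∧ x i ≤ 1) ∧ ∑ i, x i = 1}

/-- `ξ^α_m(x,y)`. -/
def xiK {d : ℕ} (α : Fin d → ℝ) (m : ℕ) (x y : Fin d → ℝ) : ℝ :=
  ∑ l ∈ Finset.Nat.antidiagonalTuple d m,
    ((m.factorial : ℝ) / ∏ i, ((l i).factorial : ℝ)) *
      (rf (∑ i, α i) m / ∏ i, rf (α i) (l i)) * ∏ i, (x i * y i) ^ l i

/-- Jacobi polynomial kernel `Q^α_n(x,y)`. -/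
def Qker {d : ℕ} (α : Fin d → ℝ) (n : ℕ) (x y : Fin d → ℝ) : ℝ :=
  ∑ m ∈ Finset.range (n + 1), acoef (∑ i, α i) n m * xiK α m x y

/-- Dirichlet–multinomial pmf `DM_α(l; m)`. -/
def DM {d : ℕ} (α : Fin d → ℝ) (l : Fin d → ℕ) (m : ℕ) : ℝ :=
  ((m.factorial : ℝ) / ∏ i, ((l i).factorial : ℝ)) *
    (∏ i, rf (α i) (l i)) / rf (∑ i, α i) m

/-- `ξ^{H,α}_m(r,s)`. -/
def xiH {d : ℕ} (α : Fin d → ℝ) (m : ℕ) (r s : Fin d → ℕ) : ℝ :=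
  ∑ l ∈ Finset.Nat.antidiagonalTuple d m,
    DM (fun i => α i + r i) l m * DM (fun i => α i + s i) l m / DM α l m

/-- Hahn polynomial kernel `H^α_n(r,s)` for `|r| = |s| = N`. -/
def Hker {d : ℕ} (α : Fin d → ℝ) (N n : ℕ) (r s : Fin d → ℕ) : ℝ :=
  (rf ((∑ i, α i) + N) n / ff N n) *
    ∑ m ∈ Finset.range (n + 1), acoef (∑ i, α i) n m * xiH α m r s

/-- `χ^{H,α}_m(r,s)`. -/
def chiH {d : ℕ} (α : Fin d → ℝ) (N m : ℕ) (r s : Fin d → ℕ) : ℝ :=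
  ∑ l ∈ Finset.Nat.antidiagonalTuple d m,
    (1 / DM α l m) *
      (((m.factorial : ℝ) / ∏ i, ((l i).factorial : ℝ)) * (∏ i, ff (r i) (l i)) / ff N m) *
      (((m.factorial : ℝ) / ∏ i, ((l i).factorial : ℝ)) * (∏ i, ff (s i) (l i)) / ff N m)

/-- Normalized Jacobi polynomial `R_n^{a,b}` on `[0,1]`. -/
def Rpoly (a b : ℝ) (n : ℕ) (x : ℝ) : ℝ :=
  ∑ k ∈ Finset.range (n + 1),
    (-1 : ℝ) ^ k * (n.choose k : ℝ) * (rf ((n : ℝ) + (a + b) - 1) k / rf b k) * (1 - x) ^ k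

/-- `ζ_n^{a,b}`. -/
def zeta (a b : ℝ) (n : ℕ) : ℝ :=
  if n = 0 then 1
  else ((a + b) + 2 * n - 1) * rf (a + b) (n - 1) * rf b n / ((n.factorial : ℝ) * rf a n)

/-- Hahn polynomial `h_n^{a,b}(r; N)`. -/
def hahnPoly (a b : ℝ) (N n r : ℕ) : ℝ :=
  ∑ k ∈ Finset.range (n + 1),
    (-1 : ℝ) ^ k * (n.choose k : ℝ) * rf ((n : ℝ) + (a + b) - 1) k * ff r k /
      (rf a k * ff N k)

/-- `u^{a,b}_{N,n}`. -/
def uCoef (a b : ℝ) (N n : ℕ) : ℝ :=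
  if n = 0 then 1
  else (N.choose n : ℝ) * ((a + b) + 2 * n - 1) * rf (a + b) (n - 1) * rf a n /
    (rf ((a + b) + N) n * rf b n)

/-- Beta function `B(a,b) = Γ(a)Γ(b)/Γ(a+b)`. -/
def BetaFn (a b : ℝ) : ℝ := Real.Gamma a * Real.Gamma b / Real.Gamma (a + b)

/-- Condition (G) on the parameter vector `α`. -/
def CondG {d : ℕ} (α : Fin d → ℝ) : Prop :=
  ∀ j : Fin d, 0 < (j : ℕ) →
    (α j ≤ ∑ i ∈ Finset.univ.filter fun i : Fin d => (i : ℕ) < (j : ℕ), α i) ∧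
      (1 / 2 ≤ α j ∨ 2 ≤ ∑ i ∈ Finset.univ.filter fun i : Fin d => (i : ℕ) ≤ (j : ℕ), α i)

/-- Density of the Dirichlet distribution in the coordinates `(u₁, …, u_{d−1})`. -/
def dirichletDensity (k : ℕ) (α : Fin (k + 1) → ℝ) (u : Fin k → ℝ) : ℝ :=
  if (∀ i, 0 < u i ∧ u i < 1) ∧ ∑ i, u i < 1 then
    (Real.Gamma (∑ i, α i) / ∏ i, Real.Gamma (α i)) *
      (∏ i : Fin k, u i ^ (α (Fin.castSucc i) - 1)) * (1 - ∑ i, u i) ^ (α (Fin.last k) - 1)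
  else 0

/-- The Dirichlet probability measure `D_α` on `Δ_{d−1} ⊆ ℝ^d`, `d = k + 1`. -/
def dirichlet (k : ℕ) (α : Fin (k + 1) → ℝ) : Measure (Fin (k + 1) → ℝ) :=
  ((volume : Measure (Fin k → ℝ)).withDensity fun u =>
      ENNReal.ofReal (dirichletDensity k α u)).map fun u => Fin.snoc u (1 - ∑ i, u i)

/-!
In the degree-`m` Bernstein basis `B_r(x) = C(m,r) x^(m-r) (1-x)^r`, the coefficients of
`R_n^{a,b}` are the Hahn polynomials `h_n(r) = h_n^{b,a}(r; m)`, while the left-hand side is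
diagonal with entries `(θ)_(m) / w_r` for the beta-binomial weight
`w_r = C(m,r) (b)_(r) (a)_(m-r)`. The theorem is therefore the dual orthogonality
`∑_n c_n ζ_n h_n(r) h_n(r') = δ_{rr'} (θ)_(m) / w_r`, `c_n = m_[n] / (θ+m)_(n)`. It follows from
the orthogonality `∑_r w_r h_n(r) h_n'(r) = δ_{nn'} g_n` (squared norms `g_n`) and the
normalisation `c_n ζ_n g_n = (θ)_(m)`, because a square matrix with orthonormal rows has
orthonormal columns.

Orthogonality of `h_n^{a,b}(·; N)` is tested against `(b + N - r)_(s)`, `s < n`: since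
`(b)_(N-r) (b + N - r)_(s) = (b)_(N-r+s)`, the moments are Vandermonde convolutions, and a
Chu–Vandermonde sum then leaves the factor `(s + 1 - n)_(n) = 0`.
-/

open Polynomial in
lemma rf_eq_ascPochhammer_eval (a : ℝ) (n : ℕ) : rf a n = (ascPochhammer ℝ n).eval a := by
  induction n with
  | zero => simp [rf]
  | succ n ih => rw [rf, ih, ascPochhammer_succ_eval]

open Polynomial in
lemma rf_add (a : ℝ) (p q : ℕ) : rf a (p + q) = rf a p * rf (a + p) q := by
  simp only [rf_eq_ascPochhammer_eval, ← ascPochhammer_mul, eval_mul, eval_comp, eval_add, eval_X,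
    eval_natCast]

lemma rf_pos {a : ℝ} (ha : 0 < a) (n : ℕ) : 0 < rf a n := by
  rw [rf_eq_ascPochhammer_eval]
  exact ascPochhammer_pos n a ha

lemma rf_one (n : ℕ) : rf 1 n = n.factorial := by
  rw [rf_eq_ascPochhammer_eval, ascPochhammer_eval_one]

lemma rf_neg (a : ℝ) (n : ℕ) : rf (-a) n = (-1) ^ n * rf (a - n + 1) n := by
  rw [rf_eq_ascPochhammer_eval, ascPochhammer_eval_neg_eq_descPochhammer,
    descPochhammer_eval_eq_ascPochhammer, rf_eq_ascPochhammer_eval]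

lemma rf_natCast_add_one_sub_eq_zero {s n : ℕ} (h : s < n) : rf ((s : ℝ) + 1 - n) n = 0 := by
  have hcast : (s : ℝ) + 1 - n = -((n - 1 - s : ℕ) : ℝ) := by
    rw [Nat.cast_sub (by omega), Nat.cast_sub (by omega)]
    ring
  rw [hcast, rf_eq_ascPochhammer_eval, ascPochhammer_eval_neg_coe_nat_of_lt (by omega)]

lemma ff_eq_neg_one_pow_mul_rf (N k : ℕ) : ff N k = (-1) ^ k * rf (-(N : ℝ)) k := by
  rw [rf_eq_ascPochhammer_eval, ascPochhammer_eval_neg_eq_descPochhammer,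
    descPochhammer_eval_eq_descFactorial, ← mul_assoc, ← mul_pow, ff]
  norm_num

lemma ff_ne_zero {N k : ℕ} (h : k ≤ N) : ff N k ≠ 0 := by
  rw [ff, Nat.cast_ne_zero, ← Nat.pos_iff_ne_zero, Nat.descFactorial_pos]
  exact h

lemma rf_add_eq_sum_antidiagonal (u v : ℝ) (n : ℕ) :
    rf (u + v) n = ∑ ij ∈ antidiagonal n, (n.choose ij.1 : ℝ) * (rf u ij.1 * rf v ij.2) := by
  induction n with
  | zero => simp [rf]
  | succ n ih =>
    rw [Finset.sum_antidiagonal_choose_succ_mul (fun i j => rf u i * rf v j), rf, ih, sum_mul,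
      ← sum_add_distrib]
    refine sum_congr rfl fun ij hij => ?_
    rw [HasAntidiagonal.mem_antidiagonal] at hij
    rw [← Nat.choose_symm_of_eq_add hij.symm]
    simp only [rf, ← hij]
    push_cast
    ring

lemma rf_add_eq_sum (u v : ℝ) (n : ℕ) :
    rf (u + v) n = ∑ i ∈ range (n + 1), (n.choose i : ℝ) * rf u i * rf v (n - i) := by
  rw [rf_add_eq_sum_antidiagonal, Nat.sum_antidiagonal_eq_sum_range_succ
    (fun i j => (n.choose i : ℝ) * (rf u i * rf v j))]
  simp only [mul_assoc]

lemma sum_neg_one_pow_mul_choose_mul_rf (x y : ℝ) (n : ℕ) :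
    ∑ k ∈ range (n + 1), (-1) ^ k * (n.choose k : ℝ) * rf x k * rf (y + k) (n - k) =
      rf (y - x) n := by
  have hreflect : ∀ k ∈ range (n + 1),
      (-1) ^ k * (n.choose k : ℝ) * rf x k * rf (y + k) (n - k) =
        (-1) ^ n * ((n.choose k : ℝ) * rf x k * rf (1 - y - n) (n - k)) := by
    intro k hk
    have hkn : k ≤ n := mem_range_succ_iff.mp hk
    have hsign : (-1 : ℝ) ^ n = (-1) ^ k * (-1) ^ (n - k) := by
      rw [← pow_add, Nat.add_sub_cancel' hkn]
    have hsq : ((-1 : ℝ) ^ (n - k)) ^ 2 = 1 := by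
      rw [← pow_mul, mul_comm, pow_mul, neg_one_sq, one_pow]
    rw [show (1 : ℝ) - y - n = -(y + n - 1) by ring, rf_neg, Nat.cast_sub hkn,
      show y + n - 1 - (n - k : ℝ) + 1 = y + k by ring, hsign]
    linear_combination -(-1) ^ k * (n.choose k : ℝ) * rf x k * rf (y + k) (n - k) * hsq
  rw [sum_congr rfl hreflect, ← mul_sum, ← rf_add_eq_sum,
    show x + (1 - y - n) = -(y - x + n - 1) by ring, rf_neg,
    show y - x + n - 1 - n + 1 = y - x by ring, ← mul_assoc, ← mul_pow]
  norm_num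

lemma choose_mul_descFactorial_add (N k t : ℕ) :
    N.choose (k + t) * (k + t).descFactorial k = N.descFactorial k * (N - k).choose t := by
  rw [Nat.descFactorial_eq_factorial_mul_choose, Nat.descFactorial_eq_factorial_mul_choose,
    mul_left_comm, Nat.choose_mul (Nat.le_add_right k t), Nat.add_sub_cancel_left]
  ring

lemma sum_choose_mul_ff_mul (N k : ℕ) (f : ℕ → ℝ) :
    ∑ r ∈ range (N + 1), (N.choose r : ℝ) * ff r k * f r =
      ff N k * ∑ t ∈ range (N - k + 1), ((N - k).choose t : ℝ) * f (k + t) := by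
  have hff : ∀ {r}, r < k → ff r k = 0 := fun h => by
    rw [ff, Nat.descFactorial_eq_zero_iff_lt.mpr h, Nat.cast_zero]
  rcases le_or_gt k N with hk | hk
  · rw [show N + 1 = k + (N - k + 1) by omega, sum_range_add, mul_sum,
      sum_eq_zero fun r hr => by rw [hff (mem_range.mp hr), mul_zero, zero_mul], zero_add]
    refine sum_congr rfl fun t _ => ?_
    have h := congrArg (Nat.cast (R := ℝ)) (choose_mul_descFactorial_add N k t)
    push_cast at h
    rw [ff, ff, ← mul_assoc, h]
  · rw [hff hk, zero_mul]
    exact sum_eq_zero fun r hr => by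
      rw [hff ((mem_range_succ_iff.mp hr).trans_lt hk), mul_zero, zero_mul]

lemma ff_eq_sum_rf (c : ℝ) {N r : ℕ} (hr : r ≤ N) (q : ℕ) :
    ff r q = (-1) ^ q *
      ∑ s ∈ range (q + 1), (q.choose s : ℝ) * rf (c + (N - r : ℕ)) s * rf (-(c + N)) (q - s) := by
  rw [ff_eq_neg_one_pow_mul_rf, ← rf_add_eq_sum, Nat.cast_sub hr]
  ring_nf

def hahnWeight (a b : ℝ) (N r : ℕ) : ℝ := N.choose r * rf a r * rf b (N - r)

def hahnNormSq (a b : ℝ) (N n : ℕ) : ℝ :=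
  rf (n + (a + b) - 1) n * rf b n * n.factorial * rf (a + b + n + n) (N - n) / (rf a n * ff N n)

lemma hahnWeight_pos {a b : ℝ} (ha : 0 < a) (hb : 0 < b) {N r : ℕ} (hr : r ≤ N) :
    0 < hahnWeight a b N r :=
  mul_pos (mul_pos (Nat.cast_pos.mpr (Nat.choose_pos hr)) (rf_pos ha r)) (rf_pos hb (N - r))

lemma hahnPoly_eq_sum (a b : ℝ) (N n r : ℕ) :
    hahnPoly a b N n r = ∑ k ∈ range (n + 1),
      (-1) ^ k * n.choose k * rf (n + (a + b) - 1) k / (rf a k * ff N k) * ff r k :=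
  sum_congr rfl fun _ _ => by ring

lemma sum_hahnWeight_mul_ff_mul_rf (a b : ℝ) (N k s : ℕ) :
    ∑ r ∈ range (N + 1), hahnWeight a b N r * ff r k * rf (b + (N - r : ℕ)) s =
      ff N k * rf a k * rf b s * rf (a + b + k + s) (N - k) := by
  have hsplit : ∀ t, ((N - k).choose t : ℝ) *
        (rf a (k + t) * (rf b (N - (k + t)) * rf (b + (N - (k + t) : ℕ)) s)) =
      rf a k * rf b s * ((N - k).choose t * rf (a + k) t * rf (b + s) (N - k - t)) := by
    intro t
    rw [rf_add a k t, ← rf_add b, show N - (k + t) + s = s + (N - k - t) by omega, rf_add b s]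
    ring
  calc ∑ r ∈ range (N + 1), hahnWeight a b N r * ff r k * rf (b + (N - r : ℕ)) s
      = ∑ r ∈ range (N + 1),
          (N.choose r : ℝ) * ff r k * (rf a r * (rf b (N - r) * rf (b + (N - r : ℕ)) s)) :=
        sum_congr rfl fun r _ => by unfold hahnWeight; ring
    _ = ff N k * rf a k * rf b s * rf (a + k + (b + s)) (N - k) := by
        rw [sum_choose_mul_ff_mul, sum_congr rfl fun t _ => hsplit t, ← mul_sum, ← rf_add_eq_sum]
        ring
    _ = ff N k * rf a k * rf b s * rf (a + b + k + s) (N - k) := by ring_nf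

lemma sum_hahnWeight_mul_hahnPoly_mul_rf {a : ℝ} (ha : 0 < a) (b : ℝ) {N n : ℕ} (hn : n ≤ N)
    (s : ℕ) :
    ∑ r ∈ range (N + 1), hahnWeight a b N r * hahnPoly a b N n r * rf (b + (N - r : ℕ)) s =
      rf b s * rf ((s : ℝ) + 1 - n) n * rf (a + b + s + n) (N - n) := by
  set c : ℕ → ℝ := fun k => (-1) ^ k * n.choose k * rf (n + (a + b) - 1) k / (rf a k * ff N k)
  have hterm : ∀ k ∈ range (n + 1),
      c k * (ff N k * rf a k * rf b s * rf (a + b + k + s) (N - k)) =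
        rf b s * rf (a + b + s + n) (N - n) *
          ((-1) ^ k * n.choose k * rf (n + (a + b) - 1) k * rf (a + b + s + k) (n - k)) := by
    intro k hk
    have hkn : k ≤ n := mem_range_succ_iff.mp hk
    have hsplit : rf (a + b + k + s) (N - k) =
        rf (a + b + s + k) (n - k) * rf (a + b + s + n) (N - n) := by
      rw [show N - k = (n - k) + (N - n) by omega, rf_add, Nat.cast_sub hkn,
        show a + b + k + s = a + b + s + k by ring,
        show a + b + s + k + (n - k : ℝ) = a + b + s + n by ring]
    have hff : ff N k ≠ 0 := ff_ne_zero (hkn.trans hn)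
    have hrf : rf a k ≠ 0 := (rf_pos ha k).ne'
    simp only [c, hsplit]
    field_simp
  calc ∑ r ∈ range (N + 1), hahnWeight a b N r * hahnPoly a b N n r * rf (b + (N - r : ℕ)) s
      = ∑ k ∈ range (n + 1), c k *
          ∑ r ∈ range (N + 1), hahnWeight a b N r * ff r k * rf (b + (N - r : ℕ)) s := by
        simp only [hahnPoly_eq_sum, mul_sum, sum_mul]
        rw [sum_comm]
        exact sum_congr rfl fun k _ => sum_congr rfl fun r _ => by ring
    _ = rf b s * rf (a + b + s + n) (N - n) * ∑ k ∈ range (n + 1),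
          (-1) ^ k * n.choose k * rf (n + (a + b) - 1) k * rf (a + b + s + k) (n - k) := by
        simp only [sum_hahnWeight_mul_ff_mul_rf, mul_sum]
        exact sum_congr rfl hterm
    _ = rf b s * rf ((s : ℝ) + 1 - n) n * rf (a + b + s + n) (N - n) := by
        rw [sum_neg_one_pow_mul_choose_mul_rf,
          show a + b + s - (n + (a + b) - 1) = (s : ℝ) + 1 - n by ring]
        ring

lemma sum_hahnWeight_mul_hahnPoly_mul_ff {a : ℝ} (ha : 0 < a) (b : ℝ) {N n q : ℕ} (hn : n ≤ N)
    (hq : q ≤ n) :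
    ∑ r ∈ range (N + 1), hahnWeight a b N r * hahnPoly a b N n r * ff r q =
      if q = n then (-1) ^ n * rf b n * n.factorial * rf (a + b + n + n) (N - n) else 0 := by
  have hexpand : ∑ r ∈ range (N + 1), hahnWeight a b N r * hahnPoly a b N n r * ff r q =
      (-1) ^ q * ∑ s ∈ range (q + 1), (q.choose s : ℝ) * rf (-(b + N)) (q - s) *
        (rf b s * rf ((s : ℝ) + 1 - n) n * rf (a + b + s + n) (N - n)) := by
    simp only [← sum_hahnWeight_mul_hahnPoly_mul_rf ha b hn, mul_sum]
    rw [sum_comm]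
    refine sum_congr rfl fun r hr => ?_
    rw [ff_eq_sum_rf b (mem_range_succ_iff.mp hr), mul_sum, mul_sum]
    exact sum_congr rfl fun s _ => by ring
  rw [hexpand]
  split_ifs with hqn
  · subst hqn
    rw [sum_eq_single_of_mem q (self_mem_range_succ q) fun s hs hsq => by
      rw [rf_natCast_add_one_sub_eq_zero (lt_of_le_of_ne (mem_range_succ_iff.mp hs) hsq)]
      ring]
    rw [Nat.choose_self, Nat.sub_self, add_sub_cancel_left, rf_one]
    simp only [rf]
    ring
  · rw [sum_eq_zero fun s hs => by
      rw [rf_natCast_add_one_sub_eq_zero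
        ((mem_range_succ_iff.mp hs).trans_lt (lt_of_le_of_ne hq hqn))]
      ring]
    ring

lemma sum_hahnWeight_mul_hahnPoly_mul_hahnPoly_of_le {a : ℝ} (ha : 0 < a) (b : ℝ) {N n n' : ℕ}
    (hn : n ≤ N) (h : n' ≤ n) :
    ∑ r ∈ range (N + 1), hahnWeight a b N r * (hahnPoly a b N n r * hahnPoly a b N n' r) =
      if n' = n then hahnNormSq a b N n else 0 := by
  set c : ℕ → ℝ := fun k => (-1) ^ k * n'.choose k * rf (n' + (a + b) - 1) k / (rf a k * ff N k)
  have hexpand :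
      ∑ r ∈ range (N + 1), hahnWeight a b N r * (hahnPoly a b N n r * hahnPoly a b N n' r) =
        ∑ q ∈ range (n' + 1), c q *
          ∑ r ∈ range (N + 1), hahnWeight a b N r * hahnPoly a b N n r * ff r q := by
    simp only [hahnPoly_eq_sum a b N n', mul_sum]
    rw [sum_comm]
    exact sum_congr rfl fun q _ => sum_congr rfl fun r _ => by ring
  rw [hexpand, sum_congr rfl fun q hq => by
    rw [sum_hahnWeight_mul_hahnPoly_mul_ff ha b hn ((mem_range_succ_iff.mp hq).trans h),
      mul_ite, mul_zero], sum_ite_eq' (range (n' + 1)) n]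
  simp only [mem_range_succ_iff]
  split_ifs with h1 h2 h2
  · subst h2
    have hsq : (-1 : ℝ) ^ n' * (-1) ^ n' = 1 := by rw [← mul_pow]; norm_num
    simp only [c, hahnNormSq, Nat.choose_self, Nat.cast_one]
    linear_combination rf (n' + (a + b) - 1) n' * rf b n' * n'.factorial *
      rf (a + b + n' + n') (N - n') / (rf a n' * ff N n') * hsq
  · omega
  · omega
  · rfl

lemma hahnPoly_orthogonal {a : ℝ} (ha : 0 < a) (b : ℝ) {N n n' : ℕ} (hn : n ≤ N) (hn' : n' ≤ N) :
    ∑ r ∈ range (N + 1), hahnWeight a b N r * (hahnPoly a b N n r * hahnPoly a b N n' r) =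
      if n = n' then hahnNormSq a b N n else 0 := by
  rcases le_total n' n with h | h
  · rw [sum_hahnWeight_mul_hahnPoly_mul_hahnPoly_of_le ha b hn h]
    exact if_congr eq_comm rfl rfl
  · simp only [mul_comm (hahnPoly a b N n _)]
    rw [sum_hahnWeight_mul_hahnPoly_mul_hahnPoly_of_le ha b hn' h]
    split_ifs with h1 <;> simp [h1]

lemma sum_choose_mul_ff_mul_pow_mul_one_sub_pow (m k : ℕ) (x : ℝ) :
    ∑ r ∈ range (m + 1), (m.choose r : ℝ) * ff r k * (x ^ (m - r) * (1 - x) ^ r) =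
      ff m k * (1 - x) ^ k := by
  rw [sum_choose_mul_ff_mul]
  congr 1
  calc ∑ t ∈ range (m - k + 1), ((m - k).choose t : ℝ) * (x ^ (m - (k + t)) * (1 - x) ^ (k + t))
      = (1 - x) ^ k * ((1 - x) + x) ^ (m - k) := by
        rw [add_pow, mul_sum]
        refine sum_congr rfl fun t _ => ?_
        rw [show m - (k + t) = m - k - t by omega, pow_add]
        ring
    _ = (1 - x) ^ k := by simp

lemma Rpoly_eq_sum_hahnPoly (a b : ℝ) {m n : ℕ} (hn : n ≤ m) (x : ℝ) :
    Rpoly a b n x = ∑ r ∈ range (m + 1),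
      (m.choose r : ℝ) * hahnPoly b a m n r * (x ^ (m - r) * (1 - x) ^ r) := by
  have hpow : ∀ k ∈ range (n + 1), (1 - x) ^ k =
      (∑ r ∈ range (m + 1), (m.choose r : ℝ) * ff r k * (x ^ (m - r) * (1 - x) ^ r)) / ff m k := by
    intro k hk
    rw [sum_choose_mul_ff_mul_pow_mul_one_sub_pow,
      mul_div_cancel_left₀ _ (ff_ne_zero ((mem_range_succ_iff.mp hk).trans hn))]
  rw [Rpoly, sum_congr rfl fun k hk => by rw [hpow k hk]]
  simp only [hahnPoly_eq_sum, mul_sum, sum_mul, sum_div]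
  rw [sum_comm]
  refine sum_congr rfl fun r _ => sum_congr rfl fun k _ => ?_
  rw [add_comm b a]
  ring

lemma ff_div_rf_mul_zeta_mul_hahnNormSq {a b : ℝ} (ha : 0 < a) (hb : 0 < b) {m n : ℕ}
    (hn : n ≤ m) : ff m n / rf (a + b + m) n * zeta a b n * hahnNormSq b a m n = rf (a + b) m := by
  rcases n with _ | p
  · simp [zeta, hahnNormSq, rf, ff, add_comm b a]
  simp only [zeta, hahnNormSq, add_comm b a, if_neg (Nat.succ_ne_zero p), Nat.add_sub_cancel]
  set θ := a + b
  have hprod : rf θ p * rf (θ + p) (p + 1) * (θ + 2 * p + 1) * rf (θ + 2 * p + 2) (m - (p + 1)) =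
      rf θ m * rf (θ + m) (p + 1) := by
    have hrf : rf θ (p + (p + 1) + 1 + (m - (p + 1))) = rf θ (m + (p + 1)) := by
      congr 1
      omega
    rw [rf_add θ (p + (p + 1) + 1),
      show rf θ (p + (p + 1) + 1) = rf θ (p + (p + 1)) * (θ + ↑(p + (p + 1))) from rfl,
      rf_add θ p (p + 1), rf_add θ m] at hrf
    rw [← hrf]
    push_cast
    ring_nf
  rw [show (↑(p + 1) : ℝ) + θ - 1 = θ + p by push_cast; ring,
    show θ + ↑(p + 1) + ↑(p + 1) = θ + 2 * p + 2 by push_cast; ring,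
    show θ + 2 * ↑(p + 1) - 1 = θ + 2 * p + 1 by push_cast; ring]
  have h1 : ff m (p + 1) ≠ 0 := ff_ne_zero hn
  have h2 : rf (θ + m) (p + 1) ≠ 0 := (rf_pos (by positivity) _).ne'
  have h3 : rf a (p + 1) ≠ 0 := (rf_pos ha _).ne'
  have h4 : rf b (p + 1) ≠ 0 := (rf_pos hb _).ne'
  field_simp
  linear_combination hprod

lemma orthonormal_columns_of_orthonormal_rows {ι R : Type*} [Fintype ι] [DecidableEq ι]
    [CommRing R] (u : ι → ι → R) (w d : ι → R)
    (h : ∀ n n', d n * ∑ i, w i * (u n i * u n' i) = if n = n' then 1 else 0) (i j : ι) :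
    w i * ∑ n, d n * (u n i * u n j) = if i = j then 1 else 0 := by
  let A : Matrix ι ι R := Matrix.of u
  have hrows : Matrix.diagonal d * A * (Matrix.diagonal w * A.transpose) = 1 := by
    ext n n'
    rw [Matrix.one_apply, ← h, Matrix.mul_apply, mul_sum]
    refine sum_congr rfl fun i _ => ?_
    simp only [A, Matrix.diagonal_mul, Matrix.transpose_apply, Matrix.of_apply]
    ring
  have hcols : (Matrix.diagonal w * A.transpose * (Matrix.diagonal d * A)) i j =
      (1 : Matrix ι ι R) i j := by
    rw [mul_eq_one_comm.mp hrows]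
  rw [Matrix.one_apply, Matrix.mul_apply] at hcols
  rw [← hcols, mul_sum]
  refine sum_congr rfl fun n _ => ?_
  simp only [A, Matrix.diagonal_mul, Matrix.transpose_apply, Matrix.of_apply]
  ring

lemma sum_ff_div_rf_mul_zeta_mul_hahnPoly_mul_hahnPoly {a b : ℝ} (ha : 0 < a) (hb : 0 < b)
    {m r r' : ℕ} (hr : r ≤ m) (hr' : r' ≤ m) :
    ∑ n ∈ range (m + 1),
        ff m n / rf (a + b + m) n * zeta a b n * (hahnPoly b a m n r * hahnPoly b a m n r') =
      if r = r' then rf (a + b) m / hahnWeight b a m r else 0 := by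
  have hθ : rf (a + b) m ≠ 0 := (rf_pos (by positivity) m).ne'
  have hw : hahnWeight b a m r ≠ 0 := (hahnWeight_pos hb ha hr).ne'
  have hcols := orthonormal_columns_of_orthonormal_rows
    (fun (n r : Fin (m + 1)) => hahnPoly b a m n r) (fun r => hahnWeight b a m r)
    (fun n => ff m n / rf (a + b + m) n * zeta a b n / rf (a + b) m) (fun n n' => by
      rw [Fin.sum_univ_eq_sum_range
          (fun r => hahnWeight b a m r * (hahnPoly b a m n r * hahnPoly b a m n' r)),
        hahnPoly_orthogonal hb a (Fin.is_le n) (Fin.is_le n')]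
      simp only [Fin.val_inj]
      split_ifs
      · rw [div_mul_eq_mul_div, ff_div_rf_mul_zeta_mul_hahnNormSq ha hb (Fin.is_le n),
          div_self hθ]
      · rw [mul_zero])
    ⟨r, Nat.lt_succ_of_le hr⟩ ⟨r', Nat.lt_succ_of_le hr'⟩
  rw [Fin.sum_univ_eq_sum_range (fun n => ff m n / rf (a + b + m) n * zeta a b n / rf (a + b) m *
    (hahnPoly b a m n r * hahnPoly b a m n r'))] at hcols
  simp only [Fin.mk.injEq, div_mul_eq_mul_div _ (rf (a + b) m), ← sum_div, mul_div_assoc'] at hcols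
  split_ifs at hcols ⊢
  · rw [div_eq_one_iff_eq hθ] at hcols
    rw [eq_div_iff hw, ← hcols, mul_comm]
  · simpa [hw, hθ] using hcols

lemma sum_ff_div_rf_mul_zeta_mul_Rpoly_mul_Rpoly {a b : ℝ} (ha : 0 < a) (hb : 0 < b) (m : ℕ)
    (x y : ℝ) :
    ∑ n ∈ range (m + 1), ff m n / rf (a + b + m) n * zeta a b n * Rpoly a b n x * Rpoly a b n y =
      ∑ r ∈ range (m + 1), rf (a + b) m / hahnWeight b a m r *
        ((m.choose r : ℝ) * (x ^ (m - r) * (1 - x) ^ r)) *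
          ((m.choose r : ℝ) * (y ^ (m - r) * (1 - y) ^ r)) := by
  set B : ℕ → ℝ → ℝ := fun r z => m.choose r * (z ^ (m - r) * (1 - z) ^ r)
  calc _ = ∑ n ∈ range (m + 1), ff m n / rf (a + b + m) n * zeta a b n *
          ((∑ r ∈ range (m + 1), hahnPoly b a m n r * B r x) *
            (∑ r' ∈ range (m + 1), hahnPoly b a m n r' * B r' y)) :=
        sum_congr rfl fun n hn => by
          simp only [B, Rpoly_eq_sum_hahnPoly a b (mem_range_succ_iff.mp hn), mul_assoc,
            mul_left_comm (hahnPoly b a m n _)]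
    _ = ∑ r ∈ range (m + 1), ∑ r' ∈ range (m + 1), ∑ n ∈ range (m + 1),
          ff m n / rf (a + b + m) n * zeta a b n * (hahnPoly b a m n r * hahnPoly b a m n r') *
            B r x * B r' y := by
        simp only [sum_mul_sum]
        simp only [mul_sum]
        exact sum_comm.trans (sum_congr rfl fun r _ => sum_comm.trans
          (sum_congr rfl fun r' _ => sum_congr rfl fun n _ => by ring))
    _ = ∑ r ∈ range (m + 1), rf (a + b) m / hahnWeight b a m r * B r x * B r y := by
        refine sum_congr rfl fun r hr => ?_
        simp only [← sum_mul]
        rw [sum_congr rfl fun r' hr' => by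
          rw [sum_ff_div_rf_mul_zeta_mul_hahnPoly_mul_hahnPoly ha hb (mem_range_succ_iff.mp hr)
            (mem_range_succ_iff.mp hr'), ite_mul, ite_mul, zero_mul, zero_mul],
          sum_ite_eq, if_pos hr]

/-- expansion of `ξ_m^{α,β}` in normalized Jacobi polynomials (`d = 2`). -/
theorem stmt_1 (a b : ℝ) (ha : 0 < a) (hb : 0 < b) (m : ℕ) (x y : ℝ) :
    ∑ j ∈ Finset.range (m + 1),
        (m.choose j : ℝ) * (rf (a + b) m / (rf a j * rf b (m - j))) *
          (x * y) ^ j * ((1 - x) * (1 - y)) ^ (m - j) =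
      ∑ n ∈ Finset.range (m + 1),
        (ff m n / rf ((a + b) + m) n) * zeta a b n * Rpoly a b n x * Rpoly a b n y := by
  rw [sum_ff_div_rf_mul_zeta_mul_Rpoly_mul_Rpoly ha hb, ← sum_range_reflect]
  refine sum_congr rfl fun r hr => ?_
  have hrm := mem_range_succ_iff.mp hr
  have hC : (m.choose r : ℝ) ≠ 0 := Nat.cast_ne_zero.mpr (Nat.choose_pos hrm).ne'
  have hrfa := (rf_pos ha (m - r)).ne'
  have hrfb := (rf_pos hb r).ne'
  simp only [hahnWeight, Nat.add_sub_cancel, Nat.sub_sub_self hrm, Nat.choose_symm hrm, mul_pow]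
  field_simp
end
end

section
/- For every θ > 0, the lower-triangular arrays (a^θ_{n,m})_{0≤m≤n} and (c^θ_{m,n})_{0≤n≤m} with c^θ_{m,n} := m_[n]/(θ+m)_(n) are mutually inverse: for all integers 0 ≤ k ≤ m, Σ_{n=k}^m (m_[n]/(θ+m)_(n)) a^θ_{n,k} = δ_{mk}. -/
open MeasureTheory Finset

noncomputable section

lemma rf_zero (a : ℝ) : rf a 0 = 1 := rfl
lemma rf_succ (a : ℝ) (n : ℕ) : rf a (n+1) = rf a n * (a + n) := rfl

lemma ff_succ (m n : ℕ) (h : n ≤ m) : ff m (n+1) = ((m:ℝ) - n) * ff m n := by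
  unfold ff
  rw [Nat.descFactorial_succ, Nat.cast_mul, Nat.cast_sub h]

lemma diag (θ : ℝ) (hθ : 0 < θ) (k : ℕ) :
    ff k k / rf (θ + k) k * acoef θ k k = 1 := by
  have hffk : ff k k = (k.factorial : ℝ) := by
    unfold ff; rw [Nat.descFactorial_self]
  cases k with
  | zero => simp [ff, rf_zero, acoef]
  | succ s =>
    have h1 : rf (θ + (s+1)) (s+1) = rf (θ + (s+1)) s * (θ + 2*(s+1) - 1) := by
      rw [rf_succ]; ring_nf
    have hP : 0 < rf (θ + (s+1 : ℕ)) s := rf_pos (by positivity) s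
    have hF : (0:ℝ) < (s+1).factorial := by positivity
    rw [hffk, acoef, if_neg (Nat.succ_ne_zero s)]
    push_cast
    rw [Nat.sub_self]
    simp only [pow_zero, Nat.factorial_zero, Nat.succ_sub_one]
    push_cast at h1 ⊢
    have h2 : θ + 2 * ((s:ℝ) + 1) - 1 ≠ 0 := by
      have : (0:ℝ) ≤ s := Nat.cast_nonneg s
      intro h; linarith
    simp only [mul_one]
    push_cast at hP h1 ⊢
    rw [h1, div_mul_div_comm,
      div_eq_one_iff_eq (mul_ne_zero (mul_ne_zero hP.ne' h2) hF.ne')]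
    ring

lemma key (θ : ℝ) (hθ : 0 < θ) (m k : ℕ) (hkm : k < m) :
    ∀ N, k ≤ N → N ≤ m →
    ∑ n ∈ Finset.Icc k N, ff m n / rf (θ + m) n * acoef θ n k =
      (-1:ℝ)^(N-k) * ff m (N+1) * rf (θ + k) N /
        (((m:ℝ) - k) * rf (θ + m) N * (k.factorial : ℝ) * ((N-k).factorial : ℝ)) := by
  intro N hkN
  induction N, hkN using Nat.le_induction with
  | base =>
    intro _
    rw [Finset.Icc_self, Finset.sum_singleton, Nat.sub_self]
    have hmk : (0:ℝ) < (m:ℝ) - k := by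
      have := (Nat.cast_lt (α := ℝ)).2 hkm; linarith
    have hP : 0 < rf (θ + m) k := rf_pos (by positivity) k
    have hQ : 0 < rf (θ + k) k := rf_pos (by positivity) k
    have hF : (0:ℝ) < k.factorial := by positivity
    rw [ff_succ m k hkm.le]
    have hd : ff k k / rf (θ + k) k * acoef θ k k = 1 := diag θ hθ k
    have hffk : ff k k = (k.factorial : ℝ) := by unfold ff; rw [Nat.descFactorial_self]
    rw [hffk] at hd
    have hac : acoef θ k k = rf (θ + k) k / (k.factorial : ℝ) := by
      field_simp at hd
      field_simp
      linarith [hd]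
    rw [hac]
    simp only [pow_zero, Nat.factorial_zero]
    field_simp
    ring
  | succ N hkN ih =>
    intro hNm
    have hNm' : N ≤ m := le_of_lt (Nat.lt_of_succ_le hNm)
    have hsum := ih hNm'
    rw [Finset.sum_Icc_succ_top (Nat.le_succ_of_le hkN), hsum]
    -- algebraic identity
    have hmk : (0:ℝ) < (m:ℝ) - k := by
      have := (Nat.cast_lt (α := ℝ)).2 hkm; linarith
    have hP : 0 < rf (θ + m) N := rf_pos (by positivity) N
    have hQ : 0 < rf (θ + k) N := rf_pos (by positivity) N
    have hF : (0:ℝ) < k.factorial := by positivity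
    have hD : (0:ℝ) < (N-k).factorial := by positivity
    have hE : (0:ℝ) < ((N:ℝ) + 1 - k) := by
      have := (Nat.cast_le (α := ℝ)).2 hkN; linarith
    have hTM : (0:ℝ) < θ + m + N := by positivity
    have hsub1 : N + 1 - k = (N - k) + 1 := by omega
    have hcast : ((N - k : ℕ) : ℝ) = (N:ℝ) - k := by
      rw [Nat.cast_sub hkN]
    -- rewrite pieces
    rw [acoef, if_neg (Nat.succ_ne_zero N), hsub1]
    rw [show N + 1 - 1 = N from rfl]
    rw [ff_succ m (N+1) hNm, ff_succ m N hNm', rf_succ (θ + k) N, rf_succ (θ + m) N]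
    rw [pow_succ, Nat.factorial_succ]
    push_cast [hcast]
    set P := rf (θ + (m:ℝ)) N with hPdef
    set Q := rf (θ + (k:ℝ)) N with hQdef
    set G := ff m N with hGdef
    have hPne : P ≠ 0 := hP.ne'
    have hFne : (k.factorial : ℝ) ≠ 0 := hF.ne'
    have hDne : ((N-k).factorial : ℝ) ≠ 0 := hD.ne'
    have hEne : ((N:ℝ) - k + 1) ≠ 0 := by intro h; linarith
    have hTMne : θ + (m:ℝ) + N ≠ 0 := hTM.ne'
    have hmkne : (m:ℝ) - k ≠ 0 := hmk.ne'
    field_simp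
    ring


/-- the arrays `(a^θ_{n,m})` and `(c^θ_{m,n})` are mutually inverse. -/
theorem stmt_2 (θ : ℝ) (hθ : 0 < θ) (m k : ℕ) (hkm : k ≤ m) :
    ∑ n ∈ Finset.Icc k m, (ff m n / rf (θ + m) n) * acoef θ n k =
      if m = k then (1 : ℝ) else 0 := by
  rcases eq_or_lt_of_le hkm with h | h
  · subst h
    rw [if_pos rfl, Finset.Icc_self, Finset.sum_singleton]
    exact diag θ hθ k
  · rw [if_neg (by omega)]
    rw [key θ hθ m k h m (le_of_lt h) le_rfl]
    have : ff m (m+1) = 0 := by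
      unfold ff
      rw [Nat.descFactorial_eq_zero_iff_lt.mpr (Nat.lt_succ_self m), Nat.cast_zero]
    rw [this]
    ring
end
end

section
/- Let μ be a probability measure on a measurable space E, let ι be an index type equipped with a degree map deg : ι → ℕ whose fibers {m : deg m = j} are finite, and let (P_m)_{m∈ι} be square-integrable measurable functions P_m : E → ℝ. Define the kernels K_j(x,y) := Σ_{deg m = j} P_m(x) P_m(y). Assume: (i) for all j, l ∈ ℕ and all x, z ∈ E, ∫_E K_j(x,y) K_l(z,y) μ(dy) = δ_{jl} K_j(x,z); and (ii) for each j, the functions {P_m : deg m = j} are linearly independent as elements of L²(μ). Then the family (P_m) is orthonormal in L²(μ): ∫_E P_m P_{m'} dμ = δ_{m m'} for all m, m' ∈ ι. -/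
open MeasureTheory Finset

noncomputable section

/-! Writing `G m n = ∫ P m * P n`, expanding both kernels turns (i) into
`∑ m n, G m n * P m x * P n z = δ_{jl} ∑ m, P m x * P m z`. Comparing coefficients of the
linearly independent `P m x` (degree `j`) and then of the `P n z` (degree `l`) gives
`G m n = δ_{mn}`. -/

section

variable {E : Type*} [MeasurableSpace E] {μ : Measure E}

theorem integral_sum_mul_sum {κ κ' : Type*} (s : Finset κ) (t : Finset κ')
    (f : κ → E → ℝ) (g : κ' → E → ℝ) (a : κ → ℝ) (b : κ' → ℝ)
    (hfg : ∀ i j, Integrable (fun y => f i y * g j y) μ) :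
    ∫ y, (∑ i ∈ s, a i * f i y) * (∑ j ∈ t, b j * g j y) ∂μ
      = ∑ i ∈ s, ∑ j ∈ t, a i * b j * ∫ y, f i y * g j y ∂μ := by
  have hexpand : ∀ y, (∑ i ∈ s, a i * f i y) * (∑ j ∈ t, b j * g j y)
      = ∑ i ∈ s, ∑ j ∈ t, a i * b j * (f i y * g j y) := fun y => by
    rw [Finset.sum_mul_sum]
    exact Finset.sum_congr rfl fun i _ => Finset.sum_congr rfl fun j _ => by ring
  simp_rw [hexpand]
  rw [integral_finsetSum _ fun i _ =>
    integrable_finsetSum _ fun j _ => (hfg i j).const_mul (a i * b j)]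
  refine Finset.sum_congr rfl fun i _ => ?_
  rw [integral_finsetSum _ fun j _ => (hfg i j).const_mul (a i * b j)]
  exact Finset.sum_congr rfl fun j _ => integral_const_mul _ _

theorem eq_zero_of_sum_mul_eq_zero {p : ENNReal} {κ : Type*} {q : κ → Prop}
    (hq : {i | q i}.Finite) {f : κ → E → ℝ} (hf : ∀ i, MemLp (f i) p μ)
    (hind : LinearIndependent ℝ fun i : {i // q i} => (hf i.1).toLp (f i.1))
    {c : κ → ℝ} (hc : ∀ x, ∑ i ∈ hq.toFinset, c i * f i x = 0) :
    ∀ i, q i → c i = 0 := by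
  have : Fintype {i // q i} := hq.fintype
  have hsum : ∑ i : {i // q i}, c i.1 • (hf i.1).toLp (f i.1) = 0 := by
    rw [Lp.eq_zero_iff_ae_eq_zero]
    have hterm : ∀ᵐ x ∂μ, ∀ i : {i // q i},
        (c i.1 • (hf i.1).toLp (f i.1)) x = c i.1 * f i.1 x :=
      ae_all_iff.2 fun i => by
        filter_upwards [Lp.coeFn_smul (c i.1) ((hf i.1).toLp (f i.1)),
          (hf i.1).coeFn_toLp] with x hsmul htoLp
        rw [hsmul, Pi.smul_apply, htoLp, smul_eq_mul]
    filter_upwards [Lp.coeFn_fun_finsetSum Finset.univ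
      (fun i : {i // q i} => c i.1 • (hf i.1).toLp (f i.1)), hterm] with x hx hterm
    rw [hx, Finset.sum_congr rfl fun i _ => hterm i, Pi.zero_apply, ← hc x]
    exact (Finset.sum_subtype _ (fun i => hq.mem_toFinset) (fun i => c i * f i x)).symm
  exact fun i hi => Fintype.linearIndependent_iff.1 hind (fun i => c i.1) hsum ⟨i, hi⟩

theorem eq_of_sum_mul_eq_sum_mul {p : ENNReal} {κ : Type*} {q : κ → Prop}
    (hq : {i | q i}.Finite) {f : κ → E → ℝ} (hf : ∀ i, MemLp (f i) p μ)
    (hind : LinearIndependent ℝ fun i : {i // q i} => (hf i.1).toLp (f i.1))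
    {c d : κ → ℝ}
    (hcd : ∀ x, ∑ i ∈ hq.toFinset, c i * f i x = ∑ i ∈ hq.toFinset, d i * f i x) :
    ∀ i, q i → c i = d i := fun i hi =>
  sub_eq_zero.1 <| eq_zero_of_sum_mul_eq_zero hq hf hind (c := c - d)
    (fun x => by simp only [Pi.sub_apply, sub_mul, Finset.sum_sub_distrib, hcd x, sub_self]) i hi

end

theorem stmt_19_general {E : Type*} [MeasurableSpace E] (μ : Measure E)
    {ι : Type*} [DecidableEq ι] (deg : ι → ℕ) (hfib : ∀ j : ℕ, {m : ι | deg m = j}.Finite)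
    (P : ι → E → ℝ)
    (hL2 : ∀ m, MemLp (P m) 2 μ)
    (K : ℕ → E → E → ℝ)
    (hK : ∀ j x y, K j x y = ∑ m ∈ (hfib j).toFinset, P m x * P m y)
    (horth : ∀ j l : ℕ, ∀ x z : E,
      (∫ y, K j x y * K l z y ∂μ) = (if j = l then (1 : ℝ) else 0) * K j x z)
    (hind : ∀ j : ℕ, LinearIndependent ℝ
      (fun m : {m : ι // deg m = j} => (hL2 m.1).toLp (P m.1))) :
    ∀ m m' : ι, (∫ x, P m x * P m' x ∂μ) = if m = m' then (1 : ℝ) else 0 := by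
  set G : ι → ι → ℝ := fun m n => ∫ x, P m x * P n x ∂μ
  have hgram : ∀ j l x z,
      ∑ m ∈ (hfib j).toFinset, (∑ n ∈ (hfib l).toFinset, G m n * P n z) * P m x
      = ∑ m ∈ (hfib j).toFinset, ((if j = l then (1 : ℝ) else 0) * P m z) * P m x := by
    intro j l x z
    have h := horth j l x z
    simp only [hK] at h
    rw [integral_sum_mul_sum _ _ _ _ _ _ fun m n => (hL2 m).integrable_mul (hL2 n)] at h
    calc _ = ∑ m ∈ (hfib j).toFinset, ∑ n ∈ (hfib l).toFinset, P m x * P n z * G m n :=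
          Finset.sum_congr rfl fun m _ => by
            rw [Finset.sum_mul]
            exact Finset.sum_congr rfl fun n _ => by ring
      _ = (if j = l then 1 else 0) * ∑ m ∈ (hfib j).toFinset, P m x * P m z := h
      _ = _ := by
        rw [Finset.mul_sum]
        exact Finset.sum_congr rfl fun m _ => by ring
  intro m m'
  have hrow : ∀ z, ∑ n ∈ (hfib (deg m')).toFinset, G m n * P n z
      = ∑ n ∈ (hfib (deg m')).toFinset, (if m = n then (1 : ℝ) else 0) * P n z := by
    intro z
    rw [eq_of_sum_mul_eq_sum_mul (hfib (deg m)) hL2 (hind (deg m))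
      (fun x => hgram _ _ x z) m rfl]
    -- `δ_{deg m, deg m'}` is exactly the indicator of `m` lying in the fiber of degree `deg m'`
    simp only [ite_mul, one_mul, zero_mul, Finset.sum_ite_eq, Set.Finite.mem_toFinset,
      Set.mem_ofPred_eq]
  exact eq_of_sum_mul_eq_sum_mul (hfib (deg m')) hL2 (hind (deg m')) hrow m' rfl

/-- if the degree-kernels of a family of square-integrable functions
form an orthogonal kernel system and each degree-block is linearly independent in
`L²(μ)`, then the family is orthonormal. -/
theorem stmt_19 {E : Type*} [MeasurableSpace E] (μ : Measure E) [IsProbabilityMeasure μ]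
    {ι : Type*} [DecidableEq ι] (deg : ι → ℕ) (hfib : ∀ j : ℕ, {m : ι | deg m = j}.Finite)
    (P : ι → E → ℝ) (hmeas : ∀ m, Measurable (P m))
    (hL2 : ∀ m, MemLp (P m) 2 μ)
    (K : ℕ → E → E → ℝ)
    (hK : ∀ j x y, K j x y = ∑ m ∈ (hfib j).toFinset, P m x * P m y)
    (horth : ∀ j l : ℕ, ∀ x z : E,
      (∫ y, K j x y * K l z y ∂μ) = (if j = l then (1 : ℝ) else 0) * K j x z)
    (hind : ∀ j : ℕ, LinearIndependent ℝ
      (fun m : {m : ι // deg m = j} => (hL2 m.1).toLp (P m.1))) :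
    ∀ m m' : ι, (∫ x, P m x * P m' x ∂μ) = if m = m' then (1 : ℝ) else 0 :=
  stmt_19_general μ deg hfib P hL2 K hK horth hind
end
end
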